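/- Let q = 2^r with r ≥ 1 and define T_n over 𝔽₂ by T₀=0, T₁=x, T_{n+1}=xT_n+T_{n-1}. Then T_{q+1} + T_{q-1} = x^{q+1} and T_{q+1}·T_{q-1} = x²·(x^{q-1} + 1)² in 𝔽₂[x]. -/
import Mathlib

open Polynomial

/-- The Chebyshev-Dickson polynomials of the first kind over 𝔽₂. -/
noncomputable def Cheb2 : ℕ → Polynomial (ZMod 2)
  | 0 => 0
  | 1 => X
  | n + 2 => X * Cheb2 (n + 1) + Cheb2 n

noncomputable def Fib2 : ℕ → Polynomial (ZMod 2)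
  | 0 => 0
  | 1 => 1
  | n + 2 => X * Fib2 (n + 1) + Fib2 n

lemma h2 : (2 : Polynomial (ZMod 2)) = 0 := by
  have : ((2 : ℕ) : Polynomial (ZMod 2)) = 0 := CharP.cast_eq_zero _ 2
  exact_mod_cast this

lemma cheb2_eq (n : ℕ) : Cheb2 n = X * Fib2 n := by
  induction n using Nat.strong_induction_on with
  | _ n ih =>
    match n with
    | 0 => simp [Cheb2, Fib2]
    | 1 => simp [Cheb2, Fib2]
    | n + 2 => rw [Cheb2, Fib2, ih (n+1) (by omega), ih n (by omega)]; ring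

lemma fib_add (m n : ℕ) :
    Fib2 (m + n + 1) = Fib2 (m + 1) * Fib2 (n + 1) + Fib2 m * Fib2 n := by
  induction m using Nat.strong_induction_on with
  | _ m ih =>
    match m with
    | 0 => simp [Fib2]
    | 1 =>
      have e : 1 + n + 1 = n + 2 := by omega
      rw [e, Fib2]
      simp [Fib2]
    | m + 2 =>
      have e1 : m + 2 + n + 1 = (m + n + 1) + 2 := by omega
      have e2 : m + n + 1 + 1 = (m + 1) + n + 1 := by omega
      have r3 : Fib2 (m + 3) = X * Fib2 (m + 2) + Fib2 (m + 1) := by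
        have : m + 3 = (m + 1) + 2 := rfl
        rw [this, Fib2]
      have r2 : Fib2 (m + 2) = X * Fib2 (m + 1) + Fib2 m := by rw [Fib2]
      rw [e1, Fib2, e2, ih (m + 1) (by omega), ih m (by omega), r3, r2]
      ring

lemma cassini (n : ℕ) : Fib2 (n + 2) * Fib2 n + Fib2 (n + 1) ^ 2 = 1 := by
  induction n with
  | zero => simp [Fib2]
  | succ n ihn =>
    have r3 : Fib2 (n + 3) = X * Fib2 (n + 2) + Fib2 (n + 1) := by
      have : n + 3 = (n + 1) + 2 := rfl
      rw [this, Fib2]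
    have r2 : Fib2 (n + 2) = X * Fib2 (n + 1) + Fib2 n := by rw [Fib2]
    show Fib2 (n + 3) * Fib2 (n + 1) + Fib2 (n + 2) ^ 2 = 1
    linear_combination ihn + Fib2 (n + 1) * r3 + Fib2 (n + 2) * r2 +
      (X * Fib2 (n + 2) * Fib2 (n + 1)) * h2

lemma fib_double (m : ℕ) : Fib2 (2 * m + 2) = X * Fib2 (m + 1) ^ 2 := by
  have ha := fib_add m (m + 1)
  have e : m + (m + 1) + 1 = 2 * m + 2 := by omega
  rw [e] at ha
  have r2 : Fib2 (m + 2) = X * Fib2 (m + 1) + Fib2 m := by rw [Fib2]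
  linear_combination ha + Fib2 (m + 1) * r2 + (Fib2 m * Fib2 (m + 1)) * h2

lemma fib_pow (r : ℕ) (hr : 1 ≤ r) : Fib2 (2 ^ r) = X ^ (2 ^ r - 1) := by
  induction r, hr using Nat.le_induction with
  | base => simp [Fib2]
  | succ r hr ih =>
    have h1 : (1 : ℕ) ≤ 2 ^ r := Nat.one_le_two_pow
    have e : 2 ^ (r + 1) = 2 * (2 ^ r - 1) + 2 := by omega
    rw [e, fib_double, show 2 ^ r - 1 + 1 = 2 ^ r from by omega, ih, ← pow_mul,
      ← pow_succ']
    congr 1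
    omega

theorem cheb2_q_identities (r : ℕ) (hr : 1 ≤ r) :
    Cheb2 (2 ^ r + 1) + Cheb2 (2 ^ r - 1) = X ^ (2 ^ r + 1) ∧
    Cheb2 (2 ^ r + 1) * Cheb2 (2 ^ r - 1) = X ^ 2 * (X ^ (2 ^ r - 1) + 1) ^ 2 := by
  have h1 : (2 : ℕ) ≤ 2 ^ r := by
    calc (2:ℕ) = 2 ^ 1 := rfl
    _ ≤ 2 ^ r := Nat.pow_le_pow_right (by norm_num) hr
  obtain ⟨m, hm⟩ : ∃ m, 2 ^ r = m + 1 := ⟨2 ^ r - 1, by omega⟩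
  have Fq : Fib2 (m + 1) = X ^ m := by
    have := fib_pow r hr
    rw [hm] at this
    simpa using this
  have e1 : 2 ^ r + 1 = m + 2 := by omega
  have e2 : 2 ^ r - 1 = m := by omega
  rw [e1, e2, cheb2_eq, cheb2_eq]
  have r2 : Fib2 (m + 2) = X * Fib2 (m + 1) + Fib2 m := by rw [Fib2]
  have hc := cassini m
  constructor
  · linear_combination X * r2 + X ^ 2 * Fq + (X * Fib2 m) * h2
  · linear_combination X ^ 2 * hc - X ^ 2 * (Fib2 (m + 1) + X ^ m) * Fq -
      (X ^ 2 * X ^ m * (X ^ m + 1)) * h2
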